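/- arXiv:math/0209259 — 3 statements merged into one kernel-verified Lean document; each statement's English description precedes it below -/
import Mathlib

section
/- Let A, C, D, z be complex numbers such that x = C + i(Az + D z̄) is real. If |A|² + |D|² + 2Re(C) ≤ 0, then x ≤ |z|². -/
open Complex
open scoped ComplexConjugate

/-! Writing `w = A z + D z̄`, the real part of `C + i w` is `Re C - Im w ≤ Re C + (‖A‖ + ‖D‖) ‖z‖`,
and the hypothesis bounds this by `‖z‖² - ((‖z‖ - ‖A‖)² + (‖z‖ - ‖D‖)²) / 2`. -/

theorem Complex.norm_mul_add_mul_conj_le (A D z : ℂ) :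
    ‖A * z + D * conj z‖ ≤ (‖A‖ + ‖D‖) * ‖z‖ :=
  calc ‖A * z + D * conj z‖ ≤ ‖A * z‖ + ‖D * conj z‖ := norm_add_le _ _
    _ = (‖A‖ + ‖D‖) * ‖z‖ := by rw [norm_mul, norm_mul, norm_conj, add_mul]

theorem add_mul_le_sq_of_sq_add_sq_add_two_mul_nonpos {a d c r : ℝ}
    (h : a ^ 2 + d ^ 2 + 2 * c ≤ 0) : c + (a + d) * r ≤ r ^ 2 := by
  nlinarith [sq_nonneg (r - a), sq_nonneg (r - d)]

theorem stmt_0_general (A C D z : ℂ)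
    (hineq : ‖A‖ ^ 2 + ‖D‖ ^ 2 + 2 * C.re ≤ 0) :
    (C + Complex.I * (A * z + D * (starRingEnd ℂ z))).re ≤ ‖z‖ ^ 2 := by
  set w := A * z + D * conj z
  have hw : -w.im ≤ (‖A‖ + ‖D‖) * ‖z‖ :=
    (neg_le.mp (neg_le_of_abs_le (abs_im_le_norm w))).trans (norm_mul_add_mul_conj_le A D z)
  rw [add_re, I_mul_re]
  linarith [add_mul_le_sq_of_sq_add_sq_add_two_mul_nonpos (r := ‖z‖) hineq]

theorem stmt_0 (A C D z : ℂ)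
    (hreal : (C + Complex.I * (A * z + D * (starRingEnd ℂ z))).im = 0)
    (hineq : ‖A‖ ^ 2 + ‖D‖ ^ 2 + 2 * C.re ≤ 0) :
    (C + Complex.I * (A * z + D * (starRingEnd ℂ z))).re ≤ ‖z‖ ^ 2 :=
  stmt_0_general A C D z hineq
end

section
/- Let A, B, C, D, E, z be complex numbers and x, y positive real numbers with xy > |z|². If Az + i(Bx - Cy) + D z̄ = 0 and |A|² + |D|² + |E|² + 2Re(B̄ C) = 0, then A = B = C = D = E = 0. -/
/-! Write `w = A z + D z̄` and `s = |A|² + |D|² + |E|²`, so that the SKT equation reads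
`Re(B̄ C) = -s/2`. The balanced equation says `|w| = |Bx - Cy|`, and expanding,
`|w|² = x²|B|² + y²|C|² + xy s ≥ 2xy s` (the inequality is `|Bx + Cy|² ≥ 0`).
On the other hand `|w|² ≤ 2(|A|² + |D|²)|z|² ≤ 2s|z|²`, so `s (xy - |z|²) ≤ 0` forces `s = 0`,
i.e. `A = D = E = 0`. Then `w = 0` and `x²|B|² + y²|C|² = 0`. -/

open Complex ComplexConjugate

theorem norm_mul_add_mul_conj_sq_le (A D z : ℂ) :
    ‖A * z + D * conj z‖ ^ 2 ≤ 2 * (‖A‖ ^ 2 + ‖D‖ ^ 2) * ‖z‖ ^ 2 :=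
  calc ‖A * z + D * conj z‖ ^ 2 ≤ ((‖A‖ + ‖D‖) * ‖z‖) ^ 2 := by
        gcongr
        calc ‖A * z + D * conj z‖ ≤ ‖A * z‖ + ‖D * conj z‖ := norm_add_le _ _
          _ = (‖A‖ + ‖D‖) * ‖z‖ := by rw [norm_mul, norm_mul, norm_conj, add_mul]
    _ ≤ 2 * (‖A‖ ^ 2 + ‖D‖ ^ 2) * ‖z‖ ^ 2 := by
        rw [mul_pow]; gcongr; exact add_sq_le

theorem norm_mul_ofReal_sub_mul_ofReal_sq (B C : ℂ) (x y : ℝ) :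
    ‖B * x - C * y‖ ^ 2 = x ^ 2 * ‖B‖ ^ 2 + y ^ 2 * ‖C‖ ^ 2 - 2 * (x * y) * (conj B * C).re := by
  simp only [Complex.sq_norm, normSq_sub, normSq_ofReal, map_mul, conj_ofReal,
    mul_re, ofReal_re, ofReal_im, mul_im, conj_re, conj_im]
  ring

theorem neg_two_mul_re_conj_mul_le (B C : ℂ) (x y : ℝ) :
    -(2 * (x * y) * (conj B * C).re) ≤ x ^ 2 * ‖B‖ ^ 2 + y ^ 2 * ‖C‖ ^ 2 := by
  have h := norm_mul_ofReal_sub_mul_ofReal_sq B C x (-y)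
  have := sq_nonneg ‖B * x - C * ↑(-y)‖
  nlinarith

theorem norm_mul_add_mul_conj_eq_of_add_I_mul_eq_zero {A B C D z : ℂ} {x y : ℝ}
    (h : A * z + I * (B * x - C * y) + D * conj z = 0) :
    ‖A * z + D * conj z‖ = ‖B * x - C * y‖ := by
  rw [show A * z + D * conj z = -I * (B * x - C * y) by linear_combination h,
    norm_mul, norm_neg, norm_I, one_mul]

theorem stmt_2_general (A B C D E z : ℂ) (x y : ℝ)
    (hxy : ‖z‖ ^ 2 < x * y)
    (hbal : A * z + Complex.I * (B * (x : ℂ) - C * (y : ℂ)) + D * (starRingEnd ℂ z) = 0)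
    (hskt : ‖A‖ ^ 2 + ‖D‖ ^ 2 + ‖E‖ ^ 2
      + 2 * ((starRingEnd ℂ B) * C).re = 0) :
    A = 0 ∧ B = 0 ∧ C = 0 ∧ D = 0 ∧ E = 0 := by
  set w := A * z + D * conj z
  set s := ‖A‖ ^ 2 + ‖D‖ ^ 2 + ‖E‖ ^ 2 with hs_def
  have hw : ‖w‖ ^ 2 = x ^ 2 * ‖B‖ ^ 2 + y ^ 2 * ‖C‖ ^ 2 + x * y * s := by
    rw [norm_mul_add_mul_conj_eq_of_add_I_mul_eq_zero hbal, norm_mul_ofReal_sub_mul_ofReal_sq]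
    linear_combination -(x * y) * hskt
  have hs_nonneg : 0 ≤ s := by positivity
  have hs_le : x * y * s ≤ ‖z‖ ^ 2 * s := by
    have hlow := neg_two_mul_re_conj_mul_le B C x y
    have hup := norm_mul_add_mul_conj_sq_le A D z
    nlinarith [sq_nonneg ‖z‖, sq_nonneg ‖E‖]
  have hs : s = 0 := by nlinarith
  obtain ⟨⟨hA, hD⟩, hE⟩ : (‖A‖ ^ 2 = 0 ∧ ‖D‖ ^ 2 = 0) ∧ ‖E‖ ^ 2 = 0 := by
    rwa [hs_def, add_eq_zero_iff_of_nonneg (by positivity) (by positivity),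
      add_eq_zero_iff_of_nonneg (by positivity) (by positivity)] at hs
  have hx : x ≠ 0 := by rintro rfl; nlinarith [sq_nonneg ‖z‖]
  have hy : y ≠ 0 := by rintro rfl; nlinarith [sq_nonneg ‖z‖]
  have hBC : x ^ 2 * ‖B‖ ^ 2 + y ^ 2 * ‖C‖ ^ 2 = 0 := by
    have hw0 : w = 0 := by simp_all [w]
    simpa [hw0, hs] using hw.symm
  obtain ⟨hB, hC⟩ := (add_eq_zero_iff_of_nonneg (by positivity) (by positivity)).1 hBC
  simp_all

theorem stmt_2 (A B C D E z : ℂ) (x y : ℝ) (hx : 0 < x) (hy : 0 < y)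
    (hxy : ‖z‖ ^ 2 < x * y)
    (hbal : A * z + Complex.I * (B * (x : ℂ) - C * (y : ℂ)) + D * (starRingEnd ℂ z) = 0)
    (hskt : ‖A‖ ^ 2 + ‖D‖ ^ 2 + ‖E‖ ^ 2
      + 2 * ((starRingEnd ℂ B) * C).re = 0) :
    A = 0 ∧ B = 0 ∧ C = 0 ∧ D = 0 ∧ E = 0 :=
  stmt_2_general A B C D E z x y hxy hbal hskt
end

section
/- Let X = [[a,b],[c,d]] be an invertible 2×2 complex matrix and set u = bc - ad, γ = tr(X·conj(X)), δ = det(X·conj(X)). If I - X·conj(X) is invertible and δ ≠ 1, then the matrix Y defined by (1 - γ + δ)·Y = -X + δ·conj(X)⁻¹ satisfies (1 - γ + δ)²·tr(Y·conj(Y)) = γ - 4δ + γδ. -/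
open Matrix

theorem stmt_18 (a b c d : ℂ) :
    let X : Matrix (Fin 2) (Fin 2) ℂ := !![a, b; c, d]
    let γ := (X * X.map (starRingEnd ℂ)).trace
    let δ := (X * X.map (starRingEnd ℂ)).det
    ∀ (Y : Matrix (Fin 2) (Fin 2) ℂ),
      IsUnit (1 - X * X.map (starRingEnd ℂ)).det →
      δ ≠ 1 →
      IsUnit X.det →
      (1 - γ + δ) • Y = -X + δ • (X.map (starRingEnd ℂ))⁻¹ →
      (1 - γ + δ) ^ 2 * (Y * Y.map (starRingEnd ℂ)).trace = γ - 4 * δ + γ * δ := by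
  intro X γ δ Y hU h1 hX hY
  have hmap : X.map (starRingEnd ℂ) = !![star a, star b; star c, star d] := by
    ext i j; fin_cases i <;> fin_cases j <;> simp [X]
  have hdet : X.det = a * d - b * c := by simp [X, Matrix.det_fin_two]
  have he : (a * d - b * c) ≠ 0 := by
    rw [← hdet]; exact hX.ne_zero
  have hse : star (a * d - b * c) ≠ 0 := star_ne_zero.mpr he
  have hγ : γ = a * star a + b * star c + c * star b + d * star d := by
    simp [γ, X, hmap, Matrix.trace_fin_two, Matrix.mul_apply, Fin.sum_univ_two]
    ring
  have hδ : δ = (a * d - b * c) * star (a * d - b * c) := by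
    simp only [δ, Matrix.det_mul, hdet, hmap, Matrix.det_fin_two_of, star_sub, star_mul']
  set k := 1 - γ + δ with hk
  have hkdet : (1 - X * X.map (starRingEnd ℂ)).det = k := by
    simp only [hk, hγ, hδ]
    simp [hmap, X, Matrix.det_fin_two, Matrix.mul_apply, Fin.sum_univ_two, Matrix.one_apply,
      star_sub, star_mul']
    ring
  have hk0 : k ≠ 0 := by rw [← hkdet]; exact hU.ne_zero
  have hsk : star k = k := by
    rw [hk, hγ, hδ]
    simp only [star_add, star_sub, star_mul', star_one, star_star]
    ring
  have hinv : (X.map (starRingEnd ℂ))⁻¹ =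
      (star (a * d - b * c))⁻¹ • !![star d, -star b; -star c, star a] := by
    rw [hmap, Matrix.inv_def, Matrix.adjugate_fin_two, Matrix.det_fin_two_of,
      Ring.inverse_eq_inv']
    congr 1
    simp only [star_sub, star_mul']
  have hδm : ∀ x : ℂ, δ * ((star (a * d - b * c))⁻¹ * x) = (a * d - b * c) * x := by
    intro x
    rw [hδ, mul_assoc, ← mul_assoc (star (a * d - b * c)), mul_inv_cancel₀ hse, one_mul]
  have hZ : ∀ i j, k * Y i j =
      (!![-a + (a*d-b*c) * star d, -b - (a*d-b*c) * star b;
         -c - (a*d-b*c) * star c, -d + (a*d-b*c) * star a] : Matrix (Fin 2) (Fin 2) ℂ) i j := by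
    intro i j
    have := congrFun (congrFun hY i) j
    rw [hinv] at this
    simp only [Matrix.smul_apply, Matrix.add_apply, Matrix.neg_apply, smul_eq_mul, hδm] at this
    rw [this]
    fin_cases i <;> fin_cases j <;> simp [X] <;> ring
  have h00 := hZ 0 0
  have h01 := hZ 0 1
  have h10 := hZ 1 0
  have h11 := hZ 1 1
  simp only [Matrix.cons_val', Matrix.cons_val_zero, Matrix.cons_val_one, Matrix.head_cons,
    Matrix.empty_val', Matrix.cons_val_fin_one, Matrix.head_fin_const,
    Matrix.of_apply] at h00 h01 h10 h11
  have htr : (Y * Y.map (starRingEnd ℂ)).trace =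
      Y 0 0 * star (Y 0 0) + Y 0 1 * star (Y 1 0) + Y 1 0 * star (Y 0 1) + Y 1 1 * star (Y 1 1) := by
    simp [Matrix.trace_fin_two, Matrix.mul_apply, Fin.sum_univ_two]
    ring
  rw [htr, hγ, hδ]
  have key : k ^ 2 * (Y 0 0 * star (Y 0 0) + Y 0 1 * star (Y 1 0) + Y 1 0 * star (Y 0 1)
      + Y 1 1 * star (Y 1 1)) =
      (k * Y 0 0) * star (k * Y 0 0) + (k * Y 0 1) * star (k * Y 1 0)
      + (k * Y 1 0) * star (k * Y 0 1) + (k * Y 1 1) * star (k * Y 1 1) := by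
    simp only [star_mul', hsk]
    ring
  rw [key, h00, h01, h10, h11]
  simp only [star_add, star_sub, star_mul', star_neg, star_star]
  ring
end
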